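/- (Core of Corollary 7.7: the multiplicity m is a power of 2.) In R = MvPolynomial (Fin k) (ZMod 2), writing ∏M for the product of all elements of a multiset M, for every integer m ≥ 1 the identity ((∏E)·(∏H)·(∏Λ))^m + ((∏Γ)·(∏Δ)·(∏Λ))^m + ((∏B)·(∏Δ)·(∏H))^m + ((∏B)·(∏Γ)·(∏E))^m = 0 holds in R if and only if m is a power of 2. -/

import Mathlib

open MvPolynomial

section generalAux
set_option linter.unusedSectionVars false
variable {R : Type*} [CommRing R] {ι : Type*} [DecidableEq ι]

/-- product over odd-cardinality subsets of `T` of `w + ∑ f i`. -/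
def Opr (f : ι → R) (T : Finset ι) (w : R) : R :=
  ∏ S ∈ T.powerset.filter (fun S => Odd S.card), (w + ∑ i ∈ S, f i)

def Epr (f : ι → R) (T : Finset ι) (w : R) : R :=
  ∏ S ∈ T.powerset.filter (fun S => Even S.card), (w + ∑ i ∈ S, f i)

lemma Opr_empty (f : ι → R) (w : R) : Opr f ∅ w = 1 := by
  simp only [Opr, Finset.powerset_empty]
  rw [Finset.filter_singleton]
  simp

lemma Epr_empty (f : ι → R) (w : R) : Epr f ∅ w = w := by
  simp only [Epr, Finset.powerset_empty]
  rw [Finset.filter_singleton]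
  simp

lemma filter_powerset_insert (T : Finset ι) {a : ι} (ha : a ∉ T) (P : ℕ → Prop)
    [DecidablePred P] :
    (insert a T).powerset.filter (fun S => P S.card)
      = T.powerset.filter (fun S => P S.card)
        ∪ (T.powerset.filter (fun S => P (S.card + 1))).image (insert a) := by
  rw [Finset.powerset_insert]
  ext S
  simp only [Finset.mem_filter, Finset.mem_union, Finset.mem_image, Finset.mem_powerset]
  constructor
  · rintro ⟨hS | ⟨S', hS', rfl⟩, hP⟩
    · exact Or.inl ⟨hS, hP⟩
    · refine Or.inr ⟨S', ⟨hS', ?_⟩, rfl⟩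
      rwa [Finset.card_insert_of_notMem (fun h => ha (hS' h))] at hP
  · rintro (⟨hS, hP⟩ | ⟨S', ⟨hS', hP⟩, rfl⟩)
    · exact ⟨Or.inl hS, hP⟩
    · refine ⟨Or.inr ⟨S', hS', rfl⟩, ?_⟩
      rwa [Finset.card_insert_of_notMem (fun h => ha (hS' h))]

lemma prod_insert_parity (f : ι → R) (T : Finset ι) {a : ι} (ha : a ∉ T) (P : ℕ → Prop)
    [DecidablePred P] (w : R) :
    ∏ S ∈ (insert a T).powerset.filter (fun S => P S.card), (w + ∑ i ∈ S, f i)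
      = (∏ S ∈ T.powerset.filter (fun S => P S.card), (w + ∑ i ∈ S, f i))
        * ∏ S ∈ T.powerset.filter (fun S => P (S.card + 1)), ((w + f a) + ∑ i ∈ S, f i) := by
  rw [filter_powerset_insert T ha P, Finset.prod_union, Finset.prod_image]
  · congr 1
    refine Finset.prod_congr rfl (fun S hS => ?_)
    simp only [Finset.mem_filter, Finset.mem_powerset] at hS
    rw [Finset.sum_insert (fun h => ha (hS.1 h))]
    ring
  · intro S₁ h₁ S₂ h₂ h
    simp only [Finset.mem_coe, Finset.mem_filter, Finset.mem_powerset] at h₁ h₂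
    have e₁ : S₁ = (insert a S₁).erase a := by
      rw [Finset.erase_insert (fun h => ha (h₁.1 h))]
    have e₂ : S₂ = (insert a S₂).erase a := by
      rw [Finset.erase_insert (fun h => ha (h₂.1 h))]
    rw [e₁, e₂, h]
  · rw [Finset.disjoint_left]
    rintro S hS₁ hS₂
    simp only [Finset.mem_filter, Finset.mem_powerset, Finset.mem_image] at hS₁ hS₂
    obtain ⟨S', _, rfl⟩ := hS₂
    exact ha (hS₁.1 (Finset.mem_insert_self a S'))

lemma Opr_insert (f : ι → R) (T : Finset ι) {a : ι} (ha : a ∉ T) (w : R) :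
    Opr f (insert a T) w = Opr f T w * Epr f T (w + f a) := by
  have := prod_insert_parity f T ha (fun n => Odd n) w
  rw [Opr, this, Opr, Epr]
  congr 1
  apply Finset.prod_congr _ (fun _ _ => rfl)
  apply Finset.filter_congr
  intro S _
  simp [Nat.even_add_one, Nat.odd_add_one, parity_simps]

lemma Epr_insert (f : ι → R) (T : Finset ι) {a : ι} (ha : a ∉ T) (w : R) :
    Epr f (insert a T) w = Epr f T w * Opr f T (w + f a) := by
  have := prod_insert_parity f T ha (fun n => Even n) w
  rw [Epr, this, Epr, Opr]
  congr 1
  apply Finset.prod_congr _ (fun _ _ => rfl)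
  apply Finset.filter_congr
  intro S _
  simp [Nat.even_add_one, parity_simps]

lemma key_induction (htwo : (2:R) = 0) (f : ι → R) (T : Finset ι) :
    (∀ u v : R, Epr f T (u+v) = Epr f T u + Epr f T v) ∧
    (∀ u v : R, Opr f T (u+v) = Opr f T u + Opr f T v + Opr f T 0) ∧
    (T.Nonempty → ∀ u : R, Opr f T u = Epr f T u + Opr f T 0) := by
  induction T using Finset.induction_on with
  | empty =>
      refine ⟨fun u v => by rw [Epr_empty, Epr_empty, Epr_empty],
        fun u v => ?_, fun h => absurd h (by simp)⟩
      rw [Opr_empty, Opr_empty, Opr_empty, Opr_empty]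
      linear_combination (-1 : R) * htwo
  | @insert a T ha IH =>
      obtain ⟨hA, hB, hC⟩ := IH
      rcases T.eq_empty_or_nonempty with rfl | hne
      · refine ⟨fun u v => ?_, fun u v => ?_, fun _ u => ?_⟩
        · simp only [Epr_insert f ∅ ha, Opr_insert f ∅ ha, Epr_empty, Opr_empty]
          ring
        · simp only [Epr_insert f ∅ ha, Opr_insert f ∅ ha, Epr_empty, Opr_empty]
          linear_combination (-(f a)) * htwo
        · simp only [Epr_insert f ∅ ha, Opr_insert f ∅ ha, Epr_empty, Opr_empty]
          ring
      · have hCn := hC hne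
        refine ⟨fun u v => ?_, fun u v => ?_, fun _ u => ?_⟩
        · rw [Epr_insert f T ha, Epr_insert f T ha, Epr_insert f T ha,
            hA u v, hB (u+v) (f a), hB u v, hB u (f a), hB v (f a),
            hCn u, hCn v, hCn (f a)]
          linear_combination (Epr f T u * Epr f T v
            + Opr f T 0 * (Epr f T u + Epr f T v)) * htwo
        · rw [Opr_insert f T ha, Opr_insert f T ha, Opr_insert f T ha, Opr_insert f T ha,
            zero_add, hB u v, hA (u+v) (f a), hA u v, hA u (f a), hA v (f a),
            hCn u, hCn v]
          linear_combination (Epr f T u * Epr f T v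
            + Opr f T 0 * (Epr f T u + Epr f T v)) * htwo
        · rw [Opr_insert f T ha, Opr_insert f T ha, Epr_insert f T ha,
            zero_add, hA u (f a), hB u (f a), hCn u, hCn (f a)]
          linear_combination (-(Opr f T 0 * Epr f T u)) * htwo

lemma Opr_add (htwo : (2:R) = 0) (f : ι → R) (T : Finset ι) (u v : R) :
    Opr f T (u+v) = Opr f T u + Opr f T v + Opr f T 0 :=
  (key_induction htwo f T).2.1 u v

lemma Opr_self_eq_zero (f : ι → R) (T : Finset ι) {a : ι} (ha : a ∈ T)
    (h2 : f a + f a = 0) :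
    Opr f T (f a) = 0 := by
  apply Finset.prod_eq_zero (i := {a})
  · simp only [Finset.mem_filter, Finset.mem_powerset, Finset.card_singleton]
    exact ⟨Finset.singleton_subset_iff.2 ha, odd_one⟩
  · rw [Finset.sum_singleton, h2]

end generalAux

section gpoly
set_option linter.unusedSectionVars false
variable {A : Type*} [CommRing A] [IsDomain A]

lemma gpoly_coeff_one (htwo : (2:A) = 0) (a b : A) (t : ℕ) (ht : Odd t) (ht3 : 3 ≤ t) :
    ((Polynomial.C a * Polynomial.C b * (Polynomial.C a + Polynomial.C b))^t
      + ((Polynomial.C a + Polynomial.X) * (Polynomial.C b + Polynomial.X)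
          * (Polynomial.C a + Polynomial.C b))^t
      + (Polynomial.X * (Polynomial.C b + Polynomial.X) * Polynomial.C b)^t
      + (Polynomial.X * (Polynomial.C a + Polynomial.X) * Polynomial.C a)^t).coeff 1
    = (a*b)^(t-1) * (a+b)^(t+1) := by
  have e1 : (Polynomial.C a * Polynomial.C b * (Polynomial.C a + Polynomial.C b))^t
      = Polynomial.C ((a*b*(a+b))^t) := by
    rw [map_pow, map_mul, map_mul, map_add]
  have e2 : ((Polynomial.C a + Polynomial.X) * (Polynomial.C b + Polynomial.X)
        * (Polynomial.C a + Polynomial.C b))^t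
      = ((Polynomial.C a + Polynomial.X) * (Polynomial.C b + Polynomial.X))^t
        * Polynomial.C ((a+b)^t) := by
    rw [mul_pow, map_pow, map_add]
  have e3 : (Polynomial.X * (Polynomial.C b + Polynomial.X) * Polynomial.C b)^t
      = ((Polynomial.C b + Polynomial.X) * Polynomial.C b)^t * Polynomial.X^t := by
    rw [show Polynomial.X * (Polynomial.C b + Polynomial.X) * Polynomial.C b
      = ((Polynomial.C b + Polynomial.X) * Polynomial.C b) * Polynomial.X from by ring,
      mul_pow]
  have e4 : (Polynomial.X * (Polynomial.C a + Polynomial.X) * Polynomial.C a)^t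
      = ((Polynomial.C a + Polynomial.X) * Polynomial.C a)^t * Polynomial.X^t := by
    rw [show Polynomial.X * (Polynomial.C a + Polynomial.X) * Polynomial.C a
      = ((Polynomial.C a + Polynomial.X) * Polynomial.C a) * Polynomial.X from by ring,
      mul_pow]
  rw [e1, e2, e3, e4]
  have ht1 : ¬ (t ≤ 1) := by omega
  have hp : (((Polynomial.C a + Polynomial.X) * (Polynomial.C b + Polynomial.X))^t).coeff 1
      = (t : A) * (a*b)^(t-1) * (b + a) := by
    have hder := Polynomial.coeff_derivative
      (((Polynomial.C a + Polynomial.X) * (Polynomial.C b + Polynomial.X))^t) 0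
    rw [zero_add, Nat.cast_zero, zero_add, mul_one] at hder
    rw [← hder, Polynomial.derivative_pow, Polynomial.derivative_mul]
    simp only [Polynomial.derivative_add, Polynomial.derivative_C, Polynomial.derivative_X,
      zero_add, mul_one, one_mul]
    rw [Polynomial.coeff_zero_eq_eval_zero]
    simp only [Polynomial.eval_mul, Polynomial.eval_pow, Polynomial.eval_add,
      Polynomial.eval_C, Polynomial.eval_X, Polynomial.eval_natCast, add_zero]
  rw [Polynomial.coeff_add, Polynomial.coeff_add, Polynomial.coeff_add,
    Polynomial.coeff_C, Polynomial.coeff_mul_C, hp,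
    Polynomial.coeff_mul_X_pow', Polynomial.coeff_mul_X_pow', if_neg ht1, if_neg ht1]
  have htA : (t : A) = 1 := by
    obtain ⟨j, rfl⟩ := ht
    push_cast
    rw [htwo]
    ring
  obtain ⟨r, rfl⟩ : ∃ r, t = r + 1 := ⟨t - 1, by omega⟩
  simp only [if_neg one_ne_zero, htA, Nat.add_sub_cancel]
  ring

end gpoly


lemma comp_XpowNN_ne_zero {A : Type*} [CommRing A] [IsDomain A] {q : Polynomial A}
    (hq : q ≠ 0) {NN : ℕ} (hNN : NN ≠ 0) : q.comp (Polynomial.X ^ NN) ≠ 0 := by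
  intro hc
  rcases Polynomial.comp_eq_zero_iff.mp hc with h1 | ⟨_, h2⟩
  · exact hq h1
  · have := congrArg Polynomial.natDegree h2
    rw [Polynomial.natDegree_X_pow, Polynomial.natDegree_C] at this
    omega

lemma image_ne_zero {A : Type*} [CommRing A] [IsDomain A] (htwo : (2:A) = 0)
    (a b : A) (ha : a ≠ 0) (hb : b ≠ 0) (hab : a + b ≠ 0)
    (t NN : ℕ) (ht : Odd t) (ht3 : 3 ≤ t) (hNN : NN ≠ 0) :
    (Polynomial.C a * Polynomial.C b * (Polynomial.C a + Polynomial.C b))^t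
      + ((Polynomial.C a + Polynomial.X^NN) * (Polynomial.C b + Polynomial.X^NN)
          * (Polynomial.C a + Polynomial.C b))^t
      + (Polynomial.X^NN * (Polynomial.C b + Polynomial.X^NN) * Polynomial.C b)^t
      + (Polynomial.X^NN * (Polynomial.C a + Polynomial.X^NN) * Polynomial.C a)^t ≠ 0 := by
  have hgval : ((Polynomial.C a * Polynomial.C b * (Polynomial.C a + Polynomial.C b))^t
      + ((Polynomial.C a + Polynomial.X) * (Polynomial.C b + Polynomial.X)
          * (Polynomial.C a + Polynomial.C b))^t
      + (Polynomial.X * (Polynomial.C b + Polynomial.X) * Polynomial.C b)^t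
      + (Polynomial.X * (Polynomial.C a + Polynomial.X) * Polynomial.C a)^t) ≠ 0 := by
    intro h0
    have hco := gpoly_coeff_one htwo a b t ht ht3
    rw [h0, Polynomial.coeff_zero] at hco
    exact (mul_ne_zero (pow_ne_zero _ (mul_ne_zero ha hb)) (pow_ne_zero _ hab)) hco.symm
  have := comp_XpowNN_ne_zero hgval hNN
  intro hc
  apply this
  rw [← hc]
  simp only [Polynomial.add_comp, Polynomial.mul_comp, Polynomial.pow_comp,
    Polynomial.C_comp, Polynomial.X_comp]

set_option maxHeartbeats 1600000 in
theorem four_fixed_points_multiplicity_power_of_two (k : ℕ) (hk : 3 ≤ k)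
    (y z : MvPolynomial (Fin k) (ZMod 2))
    (hy : y = X ⟨k - 2, by omega⟩) (hz : z = X ⟨k - 1, by omega⟩)
    (B Γm Δm Em Hm Λm : Multiset (MvPolynomial (Fin k) (ZMod 2)))
    (hB : B = (Finset.univ.filter
        (fun S : Finset (Fin k) => Odd S.card ∧ ∀ i ∈ S, (i : ℕ) < k - 2)).val.map
        (fun S => ∑ i ∈ S, X i))
    (hΓ : Γm = B.map (fun b => y + X ⟨0, by omega⟩ + b))
    (hΔ : Δm = B.map (fun b => z + X ⟨0, by omega⟩ + b))
    (hE : Em = B.map (fun b => y + b))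
    (hH : Hm = B.map (fun b => z + b))
    (hΛ : Λm = B.map (fun b => y + z + X ⟨0, by omega⟩ + b))
    (m : ℕ) (hm : 1 ≤ m) :
    (Em.prod * Hm.prod * Λm.prod) ^ m + (Γm.prod * Δm.prod * Λm.prod) ^ m
      + (B.prod * Δm.prod * Hm.prod) ^ m + (B.prod * Γm.prod * Em.prod) ^ m = 0
      ↔ ∃ s : ℕ, m = 2 ^ s := by
  classical
  have htwo : (2 : MvPolynomial (Fin k) (ZMod 2)) = 0 := by
    exact_mod_cast CharP.cast_eq_zero (MvPolynomial (Fin k) (ZMod 2)) 2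
  have hself : ∀ r : MvPolynomial (Fin k) (ZMod 2), r + r = 0 := fun r => by
    linear_combination r * htwo
  set T : Finset (Fin k) := Finset.univ.filter (fun i => (i:ℕ) < k - 2) with hT
  set a0 : Fin k := ⟨0, by omega⟩ with ha0
  have ha0T : a0 ∈ T := by
    simp only [hT, Finset.mem_filter, Finset.mem_univ, true_and]
    show (0:ℕ) < k - 2
    omega
  have hTB : (Finset.univ.filter
        (fun S : Finset (Fin k) => Odd S.card ∧ ∀ i ∈ S, (i : ℕ) < k - 2))
      = T.powerset.filter (fun S => Odd S.card) := by
    ext S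
    simp only [Finset.mem_filter, Finset.mem_univ, true_and, Finset.mem_powerset, hT,
      Finset.subset_iff]
    constructor
    · rintro ⟨h1, h2⟩
      exact ⟨fun i hi => by simp [Finset.mem_filter, h2 i hi], h1⟩
    · rintro ⟨h1, h2⟩
      refine ⟨h2, fun i hi => ?_⟩
      have := h1 i hi
      exact this
  -- products as Opr values
  have hmap : ∀ w : MvPolynomial (Fin k) (ZMod 2), ((B.map (fun b => w + b)).prod) = Opr X T w := by
    intro w
    rw [hB, hTB, Multiset.map_map, Opr, Finset.prod_eq_multiset_prod]
    rfl
  have hBprod : B.prod = Opr X T 0 := by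
    rw [hB, hTB, Opr, Finset.prod_eq_multiset_prod]
    simp only [zero_add]
  set α := Opr X T y with hα
  set β := Opr X T z with hβ
  set c := Opr X T (0 : MvPolynomial (Fin k) (ZMod 2)) with hc
  have hadd := Opr_add htwo X T
  have hq : Opr X T (X a0) = 0 := Opr_self_eq_zero X T ha0T (hself _)
  have hEp : Em.prod = α := by rw [hE]; exact hmap y
  have hHp : Hm.prod = β := by rw [hH]; exact hmap z
  have hΓp : Γm.prod = α + c := by
    rw [hΓ, hmap (y + X a0), hadd y (X a0), hq, add_zero]
  have hΔp : Δm.prod = β + c := by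
    rw [hΔ, hmap (z + X a0), hadd z (X a0), hq, add_zero]
  have hΛp : Λm.prod = α + β := by
    rw [hΛ, hmap (y + z + X a0), hadd (y+z) (X a0), hq, add_zero, hadd y z]
    linear_combination c * htwo
  rw [hEp, hHp, hΓp, hΔp, hΛp, hBprod]
  have hzero : α*β*(α+β) + (α+c)*(β+c)*(α+β) + (c*(β+c)*β) + (c*(α+c)*α) = 0 := by
    linear_combination (α^2*β+α*β^2+α^2*c+β^2*c+α*c^2+β*c^2+α*β*c) * htwo
  constructor
  · -- hard direction
    intro hsum
    set s : ℕ := m.factorization 2 with hs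
    set t : ℕ := m / 2 ^ s with htdef
    have hm0 : m ≠ 0 := by omega
    have hmt : 2 ^ s * t = m := Nat.ordProj_mul_ordCompl_eq_self m 2
    have hoddt : t % 2 = 1 := Nat.two_dvd_ne_zero.mp (Nat.not_dvd_ordCompl Nat.prime_two hm0)
    clear_value t s
    by_cases ht1 : t = 1
    · exact ⟨s, by rw [← hmt, ht1, mul_one]⟩
    exfalso
    have ht3 : 3 ≤ t := by omega
    have hoddt' : Odd t := Nat.odd_iff.mpr hoddt
    have hpw : ∀ w : MvPolynomial (Fin k) (ZMod 2), w ^ m = (w ^ t) ^ (2 ^ s) := fun w => by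
      rw [← pow_mul, mul_comm t (2^s), hmt]
    rw [hpw, hpw, hpw, hpw, ← add_pow_char_pow, ← add_pow_char_pow, ← add_pow_char_pow] at hsum
    have hG : (α*β*(α+β))^t + ((α+c)*(β+c)*(α+β))^t + (c*(β+c)*β)^t + (c*(α+c)*α)^t = 0 :=
      pow_eq_zero_iff (pow_ne_zero s two_ne_zero) |>.mp hsum
    -- evaluation homomorphism to Polynomial (MvPolynomial (Fin 2) (ZMod 2))
    have htwo2 : (2 : Polynomial (MvPolynomial (Fin 2) (ZMod 2))) = 0 := by
      exact_mod_cast CharP.cast_eq_zero (Polynomial (MvPolynomial (Fin 2) (ZMod 2))) 2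
    set U : MvPolynomial (Fin 2) (ZMod 2) := X 0 with hU
    set W : MvPolynomial (Fin 2) (ZMod 2) := X 1 with hW
    set gm : Fin k → Polynomial (MvPolynomial (Fin 2) (ZMod 2)) := fun i =>
      if (i:ℕ) = k - 2 then Polynomial.C U + Polynomial.X
      else if (i:ℕ) = k - 1 then Polynomial.C W + Polynomial.X
      else Polynomial.X with hgm
    set φ : MvPolynomial (Fin k) (ZMod 2) →+* Polynomial (MvPolynomial (Fin 2) (ZMod 2)) :=
      eval₂Hom (Polynomial.C.comp MvPolynomial.C) gm with hφ
    set NN : ℕ := (T.powerset.filter (fun S => Odd S.card)).card with hNNdef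
    have hNN0 : NN ≠ 0 := by
      have : ({a0} : Finset (Fin k)) ∈ T.powerset.filter (fun S => Odd S.card) := by
        simp only [Finset.mem_filter, Finset.mem_powerset, Finset.card_singleton]
        exact ⟨Finset.singleton_subset_iff.2 ha0T, odd_one⟩
      exact Finset.card_ne_zero_of_mem this
    have hφO : ∀ w : MvPolynomial (Fin k) (ZMod 2),
        φ (Opr X T w) = (φ w + Polynomial.X) ^ NN := by
      intro w
      rw [Opr, map_prod, hNNdef, ← Finset.prod_const]
      refine Finset.prod_congr rfl (fun S hS => ?_)
      simp only [Finset.mem_filter, Finset.mem_powerset] at hS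
      rw [map_add]
      congr 1
      rw [map_sum]
      have hXi : ∀ i ∈ S, φ (X i) = Polynomial.X := by
        intro i hi
        have hiT := hS.1 hi
        simp only [hT, Finset.mem_filter, Finset.mem_univ, true_and] at hiT
        rw [hφ, eval₂Hom_X', hgm]
        simp only [if_neg (by omega : ¬ ((i:ℕ) = k - 2)), if_neg (by omega : ¬ ((i:ℕ) = k - 1))]
      rw [Finset.sum_congr rfl hXi, Finset.sum_const]
      obtain ⟨j, hj⟩ := hS.2
      have hcst : ((2*j+1 : ℕ) : Polynomial (MvPolynomial (Fin 2) (ZMod 2))) = 1 := by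
        push_cast
        rw [htwo2]
        ring
      rw [hj, nsmul_eq_mul, hcst, one_mul]
    have hXX : (Polynomial.X : Polynomial (MvPolynomial (Fin 2) (ZMod 2))) + Polynomial.X = 0 := by
      linear_combination Polynomial.X * htwo2
    have hφy : φ y = Polynomial.C U + Polynomial.X := by
      rw [hy, hφ, eval₂Hom_X', hgm]
      simp
    have hφz : φ z = Polynomial.C W + Polynomial.X := by
      rw [hz, hφ, eval₂Hom_X', hgm]
      simp [show ¬(k - 1 = k - 2) from by omega]
    have hφα : φ α = Polynomial.C (U ^ NN) := by
      rw [hα, hφO y, hφy, add_assoc, hXX, add_zero, ← map_pow]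
    have hφβ : φ β = Polynomial.C (W ^ NN) := by
      rw [hβ, hφO z, hφz, add_assoc, hXX, add_zero, ← map_pow]
    have hφc : φ c = Polynomial.X ^ NN := by
      rw [hc, hφO 0, map_zero, zero_add]
    have hφG := congrArg φ hG
    simp only [map_add, map_mul, map_pow, map_zero, hφα, hφβ, hφc] at hφG
    simp only [← Polynomial.C_pow] at hφG
    have hUne : U ^ NN ≠ 0 := pow_ne_zero _ (X_ne_zero 0)
    have hWne : W ^ NN ≠ 0 := pow_ne_zero _ (X_ne_zero 1)
    have habne : U ^ NN + W ^ NN ≠ 0 := by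
      intro hcon
      have := congrArg (eval (fun i : Fin 2 => if i = 0 then (1:ZMod 2) else 0)) hcon
      simp [hU, hW, zero_pow hNN0] at this
    have htwoR2 : (2 : MvPolynomial (Fin 2) (ZMod 2)) = 0 := by
      exact_mod_cast CharP.cast_eq_zero (MvPolynomial (Fin 2) (ZMod 2)) 2
    exact image_ne_zero htwoR2 (U^NN) (W^NN) hUne hWne habne t NN hoddt' ht3 hNN0 hφG
  · -- easy direction
    rintro ⟨s, rfl⟩
    rw [show (α*β*(α+β))^(2^s) + ((α+c)*(β+c)*(α+β))^(2^s) + (c*(β+c)*β)^(2^s)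
        + (c*(α+c)*α)^(2^s)
        = (α*β*(α+β) + (α+c)*(β+c)*(α+β) + (c*(β+c)*β) + (c*(α+c)*α))^(2^s) from by
      rw [add_pow_char_pow, add_pow_char_pow, add_pow_char_pow], hzero]
    exact zero_pow (pow_ne_zero s two_ne_zero)
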